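/- arXiv:2211.06751 — 4 statements merged into one kernel-verified Lean document; each statement's English description precedes it below -/
import Mathlib

section
/- A generalised probabilistic logic program (P, Π) defines a projective family of distributions if and only if the choice of expansions Π commutes with restrictions: for every injective map ι : A → B of finite sets, Π(restriction of ω along ι) = restriction of Π(ω) along ι, for all L'-structures ω on B. -/
abbrev Str (L : Type) (ar : L → ℕ) (A : Type) : Type :=
  ∀ R : L, (Fin (ar R) → A) → Bool

noncomputable def freeP {L A : Type} [Fintype L] [Fintype A]
    (ar : L → ℕ) (w : L → ℝ) (ω : Str L ar A) : ℝ :=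
  ∏ R : L, ∏ a : Fin (ar R) → A, if ω R a then w R else 1 - w R

/-- The pullback of a structure on `B` along a map `ι : A → B`. -/
def restr {L : Type} {ar : L → ℕ} {A B : Type} (ι : A → B)
    (ω : Str L ar B) : Str L ar A :=
  fun R a => ω R (ι ∘ a)

open scoped Classical in
noncomputable def Pr {X : Type} [Fintype X] (μ : X → ℝ) (E : Set X) : ℝ :=
  ∑ x : X, if x ∈ E then μ x else 0

section Expansions

variable {L : Type} (ar : L → ℕ) (free : L → Prop)

/-- The arity function of the subsignature `L' = {R // free R} ⊆ L`. -/
abbrev ar' : {R : L // free R} → ℕ := fun R => ar R.1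

/-- The reduct of an `L`-structure to the subsignature `L'`. -/
def red {A : Type} (ω : Str L ar A) : Str {R : L // free R} (ar' ar free) A :=
  fun R a => ω R.1 a

/-- Restriction of a structure to a subset of a `Finset ℕ` domain. -/
def restrSub {L₀ : Type} {ar₀ : L₀ → ℕ} {s t : Finset ℕ} (h : s ⊆ t)
    (ω : Str L₀ ar₀ ↥t) : Str L₀ ar₀ ↥s :=
  restr (fun x : ↥s => (⟨x.1, h x.2⟩ : ↥t)) ω

/-- A choice of expansions from `L'` to `L`: to each `L'`-structure on a finite
domain it assigns an `L`-structure on the same domain whose `L'`-reduct is it. -/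
def IsExpansion (Pi : ∀ s : Finset ℕ, Str {R : L // free R} (ar' ar free) ↥s → Str L ar ↥s) : Prop :=
  ∀ (s : Finset ℕ) (ω : Str {R : L // free R} (ar' ar free) ↥s), red ar free (Pi s ω) = ω

/-- `Π` commutes with restrictions along subset inclusions. -/
def CommutesSub (Pi : ∀ s : Finset ℕ, Str {R : L // free R} (ar' ar free) ↥s → Str L ar ↥s) : Prop :=
  ∀ (s t : Finset ℕ) (h : s ⊆ t) (ω : Str {R : L // free R} (ar' ar free) ↥t),
    Pi s (restrSub h ω) = restrSub h (Pi t ω)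

/-- `Π` commutes with restrictions along arbitrary injections. -/
def CommutesInj (Pi : ∀ s : Finset ℕ, Str {R : L // free R} (ar' ar free) ↥s → Str L ar ↥s) : Prop :=
  ∀ (s t : Finset ℕ) (ι : ↥s → ↥t), Function.Injective ι →
    ∀ ω : Str {R : L // free R} (ar' ar free) ↥t, Pi s (restr ι ω) = restr ι (Pi t ω)

end Expansions

/-! ### Auxiliary material -/

section Auxiliary

variable {I : Type} [Fintype I] [DecidableEq I] (n : I → ℕ)
  {A B : Type} [Fintype A] [Fintype B] [DecidableEq A] [DecidableEq B]

lemma freeP_pos (w : I → ℝ) (hw : ∀ R, 0 < w R ∧ w R < 1) (ω : Str I n A) :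
    0 < freeP n w ω := by
  unfold freeP
  refine Finset.prod_pos fun R _ => Finset.prod_pos fun a _ => ?_
  split
  · exact (hw R).1
  · linarith [(hw R).2]

/-- The type of tuples in `B` not coming from `A` along `ι`. -/
abbrev ResT (ι : A → B) (R : I) : Type :=
  {b : Fin (n R) → B // ¬ ∃ a : Fin (n R) → A, ι ∘ a = b}

/-- Glue a structure on `A` together with residual data into a structure on `B`. -/
noncomputable def glue (ι : A → B) (η : Str I n A) (ρ : ∀ R : I, ResT n ι R → Bool) : Str I n B :=
  fun R b => if h : ∃ a : Fin (n R) → A, ι ∘ a = b then η R (Classical.choose h) else ρ R ⟨b, h⟩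

lemma glue_image {ι : A → B} (hι : Function.Injective ι) (η : Str I n A)
    (ρ : ∀ R : I, ResT n ι R → Bool) (R : I) (a : Fin (n R) → A) :
    glue n ι η ρ R (ι ∘ a) = η R a := by
  have h : ∃ a' : Fin (n R) → A, ι ∘ a' = ι ∘ a := ⟨a, rfl⟩
  have hc : Classical.choose h = a :=
    funext fun i => hι (congrFun (Classical.choose_spec h) i)
  unfold glue
  rw [dif_pos h, hc]

lemma glue_restr {ι : A → B} (hι : Function.Injective ι) (η : Str I n A)
    (ρ : ∀ R : I, ResT n ι R → Bool) : restr ι (glue n ι η ρ) = η :=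
  funext fun R => funext fun a => glue_image n hι η ρ R a

lemma glue_off (ι : A → B) (η : Str I n A) (ρ : ∀ R : I, ResT n ι R → Bool) (R : I)
    (b : Fin (n R) → B) (h : ¬ ∃ a : Fin (n R) → A, ι ∘ a = b) :
    glue n ι η ρ R b = ρ R ⟨b, h⟩ := dif_neg h

/-- The decomposition of structures on `B` into their pullback to `A` and residual data. -/
noncomputable def strEquiv (ι : A → B) (hι : Function.Injective ι) :
    Str I n B ≃ Str I n A × (∀ R : I, ResT n ι R → Bool) where
  toFun ω' := (restr ι ω', fun R b => ω' R b.1)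
  invFun p := glue n ι p.1 p.2
  left_inv ω' := by
    funext R b
    by_cases h : ∃ a : Fin (n R) → A, ι ∘ a = b
    · show glue n ι _ _ R b = ω' R b
      unfold glue
      rw [dif_pos h]
      show ω' R (ι ∘ Classical.choose h) = ω' R b
      rw [Classical.choose_spec h]
    · exact dif_neg h
  right_inv p := by
    refine Prod.ext (glue_restr n hι p.1 p.2) ?_
    funext R b
    exact glue_off n ι p.1 p.2 R b.1 b.2

/-- The weight of residual data. -/
noncomputable def resP (ι : A → B) (w : I → ℝ) (ρ : ∀ R : I, ResT n ι R → Bool) : ℝ :=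
  ∏ R : I, ∏ b : ResT n ι R, if ρ R b then w R else 1 - w R

lemma freeP_glue {ι : A → B} (hι : Function.Injective ι) (w : I → ℝ) (η : Str I n A)
    (ρ : ∀ R : I, ResT n ι R → Bool) :
    freeP n w (glue n ι η ρ) = freeP n w η * resP n ι w ρ := by
  unfold freeP resP
  rw [← Finset.prod_mul_distrib]
  refine Finset.prod_congr rfl fun R _ => ?_
  rw [← Finset.prod_filter_mul_prod_filter_not Finset.univ
      (fun b : Fin (n R) → B => ∃ a : Fin (n R) → A, ι ∘ a = b)]
  congr 1
  · have himg : Finset.univ.filter (fun b : Fin (n R) → B => ∃ a : Fin (n R) → A, ι ∘ a = b)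
        = Finset.univ.image (fun a : Fin (n R) → A => ι ∘ a) := by
      ext b
      simp [Finset.mem_image]
    have hinj : ∀ a₁ ∈ (Finset.univ : Finset (Fin (n R) → A)), ∀ a₂ ∈ Finset.univ,
        (fun a : Fin (n R) → A => ι ∘ a) a₁ = (fun a : Fin (n R) → A => ι ∘ a) a₂ → a₁ = a₂ :=
      fun a₁ _ a₂ _ h => funext fun i => hι (congrFun h i)
    rw [himg, Finset.prod_image hinj]
    exact Finset.prod_congr rfl fun a _ => by rw [glue_image n hι]
  · rw [Finset.prod_subtype
        (p := fun b : Fin (n R) → B => ¬ ∃ a : Fin (n R) → A, ι ∘ a = b)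
        (Finset.univ.filter (fun b : Fin (n R) → B => ¬ ∃ a : Fin (n R) → A, ι ∘ a = b))
        (fun b => by simp) (fun b => if glue n ι η ρ R b then w R else 1 - w R)]
    exact Finset.prod_congr rfl fun b _ => by rw [glue_off n ι η ρ R b.1 b.2]

lemma resP_total (ι : A → B) (w : I → ℝ) :
    ∑ ρ : ∀ R : I, ResT n ι R → Bool, resP n ι w ρ = 1 := by
  unfold resP
  rw [← Fintype.prod_sum
    (f := fun (R : I) (g : ResT n ι R → Bool) => ∏ b : ResT n ι R, if g b then w R else 1 - w R)]
  refine Finset.prod_eq_one fun R _ => ?_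
  rw [← Fintype.prod_sum
    (f := fun (b : ResT n ι R) (v : Bool) => if v then w R else 1 - w R)]
  refine Finset.prod_eq_one fun b _ => ?_
  simp

/-- The free product distributions form a projective family: the marginal of the
free weight on `B`-structures along an injection `ι : A → B` is the free weight. -/
lemma marg (ι : A → B) (hι : Function.Injective ι) (w : I → ℝ) (η : Str I n A) :
    ∑ ω' ∈ Finset.univ.filter (fun ω' : Str I n B => restr ι ω' = η), freeP n w ω'
      = freeP n w η := by
  rw [Finset.sum_filter,
    ← Equiv.sum_comp (strEquiv n ι hι).symm
      (fun ω' : Str I n B => if restr ι ω' = η then freeP n w ω' else 0)]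
  have hstep : ∀ p : Str I n A × (∀ R : I, ResT n ι R → Bool),
      (if restr ι ((strEquiv n ι hι).symm p) = η
        then freeP n w ((strEquiv n ι hι).symm p) else 0)
      = if p.1 = η then freeP n w p.1 * resP n ι w p.2 else 0 := by
    intro p
    have h1 : (strEquiv n ι hι).symm p = glue n ι p.1 p.2 := rfl
    rw [h1, glue_restr n hι, freeP_glue n hι]
  rw [Fintype.sum_congr _ _ hstep, Fintype.sum_prod_type]
  have hinner : ∀ a : Str I n A,
      (∑ ρ : ∀ R : I, ResT n ι R → Bool, if a = η then freeP n w a * resP n ι w ρ else 0)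
      = if a = η then freeP n w a else 0 := by
    intro a
    by_cases h : a = η
    · simp only [h, if_true, ← Finset.mul_sum, resP_total n ι w, mul_one]
    · simp [h]
  rw [Fintype.sum_congr _ _ hinner]
  simp

end Auxiliary

/-- a generalised probabilistic logic program `(P, Π)` defines a
projective family of distributions (the pushforward of `(P,Π)_B` along any
restriction to a smaller domain is `(P,Π)_A`) iff the choice of expansions `Π`
commutes with restrictions along all injections of finite sets. -/
theorem stmt3 {L : Type} [Fintype L] [DecidableEq L] (ar : L → ℕ)
    (free : L → Prop) [DecidablePred free]
    (Pi : ∀ s : Finset ℕ, Str {R : L // free R} (ar' ar free) ↥s → Str L ar ↥s)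
    (hexp : IsExpansion ar free Pi)
    (w : {R : L // free R} → ℝ) (hw : ∀ R, 0 < w R ∧ w R < 1) :
    (∀ (s t : Finset ℕ) (ι : ↥s → ↥t), Function.Injective ι →
        ∀ ω₀ : Str L ar ↥s,
          (∑ ω' ∈ Finset.univ.filter
              (fun ω' : Str {R : L // free R} (ar' ar free) ↥t =>
                restr ι (Pi t ω') = ω₀),
            freeP (ar' ar free) w ω')
          = ∑ ω' ∈ Finset.univ.filter
              (fun ω' : Str {R : L // free R} (ar' ar free) ↥s => Pi s ω' = ω₀),
            freeP (ar' ar free) w ω')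
    ↔ CommutesInj ar free Pi := by
  constructor
  · intro hproj s t ι hι ω
    by_contra hne
    have key := hproj s t ι hι (restr ι (Pi t ω))
    -- every `ω'` contributing to the left sum has `restr ι ω' = restr ι ω`
    have hred : ∀ (u : Finset ℕ) (χ : Str {R : L // free R} (ar' ar free) ↥u)
        (ω' : Str L ar ↥u), Pi u χ = ω' → χ = red ar free ω' := by
      intro u χ ω' h
      rw [← h, hexp u χ]
    have hsub : Finset.univ.filter
          (fun ω' : Str {R : L // free R} (ar' ar free) ↥t =>
            restr ι (Pi t ω') = restr ι (Pi t ω))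
        ⊆ (Finset.univ.filter
          (fun ω' : Str {R : L // free R} (ar' ar free) ↥t =>
            restr ι ω' = restr ι ω)) := by
      intro ω' hω'
      simp only [Finset.mem_filter, Finset.mem_univ, true_and] at hω' ⊢
      have h1 : restr ι ω' = red ar free (restr ι (Pi t ω')) := by
        conv_lhs => rw [← hexp t ω']
        rfl
      have h2 : restr ι ω = red ar free (restr ι (Pi t ω)) := by
        conv_lhs => rw [← hexp t ω]
        rfl
      rw [h1, h2, hω']
    -- the bad element `Pi s (restr ι ω) ≠ restr ι (Pi t ω)` itself is not counted:
    -- LHS of key counts a strict subset of the fiber of `restr ι ω`.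
    have hle : (∑ ω' ∈ Finset.univ.filter
          (fun ω' : Str {R : L // free R} (ar' ar free) ↥s =>
            Pi s ω' = restr ι (Pi t ω)),
          freeP (ar' ar free) w ω') = 0 := by
      -- no `L'`-structure on `s` expands (under `Pi s`) to `restr ι (Pi t ω)`:
      -- its reduct would have to be `restr ι ω`, but `Pi s (restr ι ω)` is different.
      refine Finset.sum_eq_zero fun χ hχ => ?_
      exfalso
      simp only [Finset.mem_filter, Finset.mem_univ, true_and] at hχ
      have h2 : restr ι ω = red ar free (restr ι (Pi t ω)) := by
        conv_lhs => rw [← hexp t ω]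
        rfl
      have : χ = restr ι ω := by
        rw [hred s χ (restr ι (Pi t ω)) hχ, h2]
      rw [this] at hχ
      exact hne hχ
    -- but the left-hand side of key is positive: `ω` itself contributes.
    have hmem : ω ∈ Finset.univ.filter
        (fun ω' : Str {R : L // free R} (ar' ar free) ↥t =>
          restr ι (Pi t ω') = restr ι (Pi t ω)) := by
      simp
    have hpos : 0 < ∑ ω' ∈ Finset.univ.filter
        (fun ω' : Str {R : L // free R} (ar' ar free) ↥t =>
          restr ι (Pi t ω') = restr ι (Pi t ω)),
        freeP (ar' ar free) w ω' := by
      refine Finset.sum_pos' (fun ω' _ => (freeP_pos _ w hw ω').le) ⟨ω, hmem, freeP_pos _ w hw ω⟩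
    rw [key, hle] at hpos
    exact lt_irrefl 0 hpos
  · intro hcomm s t ι hι ω₀
    have hfilter : Finset.univ.filter
          (fun ω' : Str {R : L // free R} (ar' ar free) ↥t => restr ι (Pi t ω') = ω₀)
        = Finset.univ.filter
          (fun ω' : Str {R : L // free R} (ar' ar free) ↥t =>
            restr ι ω' ∈ Finset.univ.filter
              (fun η : Str {R : L // free R} (ar' ar free) ↥s => Pi s η = ω₀)) := by
      refine Finset.filter_congr fun ω' _ => ?_
      rw [← hcomm s t ι hι ω']
      simp
    rw [hfilter,
      ← Finset.sum_fiberwise_eq_sum_filter Finset.univ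
        (Finset.univ.filter
          (fun η : Str {R : L // free R} (ar' ar free) ↥s => Pi s η = ω₀))
        (fun ω' => restr ι ω') (freeP (ar' ar free) w)]
    exact Finset.sum_congr rfl fun η _ => marg _ ι hι w η
end

section
/- Let Π be a choice of expansions from L' to L commuting with restrictions, and let θ be a semantic g-ary trace of L-structures on a finite domain D (i.e., θ = {ω' : ω'|_{D'} = ω|_{D'} for all D' ⊆ D, |D'| ≤ g} for some L-structure ω on D). Then Π⁻¹(θ) is either empty or equal to a semantic g-ary trace of L'-structures on D. -/
/-- The semantic `g`-ary trace of a structure `ω` on `D`: the set of structures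
agreeing with `ω` on all restrictions to subsets of size at most `g`. -/
def SemTrace {L₀ : Type} {ar₀ : L₀ → ℕ} {D : Finset ℕ} (g : ℕ)
    (ω : Str L₀ ar₀ ↥D) : Set (Str L₀ ar₀ ↥D) :=
  {ω' | ∀ (s : Finset ℕ) (h : s ⊆ D), s.card ≤ g →
    restrSub h ω' = restrSub h ω}

/-- if `Π` commutes with restrictions, the preimage under `Π` of
a semantic `g`-ary trace of `L`-structures is empty or a semantic `g`-ary trace
of `L'`-structures. -/
theorem stmt10 {L : Type} [Fintype L] [DecidableEq L] (ar : L → ℕ)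
    (free : L → Prop) [DecidablePred free]
    (Pi : ∀ s : Finset ℕ, Str {R : L // free R} (ar' ar free) ↥s → Str L ar ↥s)
    (hexp : IsExpansion ar free Pi)
    (hcom : CommutesSub ar free Pi)
    (g : ℕ) (D : Finset ℕ) (ω : Str L ar ↥D) :
    (Pi D) ⁻¹' (SemTrace g ω) = ∅ ∨
      ∃ ω' : Str {R : L // free R} (ar' ar free) ↥D,
        (Pi D) ⁻¹' (SemTrace g ω) = SemTrace g ω' := by
  by_cases hne : (Pi D) ⁻¹' (SemTrace g ω) = ∅
  · exact Or.inl hne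
  · right
    obtain ⟨τ, hτ⟩ := Set.nonempty_iff_ne_empty.mpr hne
    refine ⟨τ, Set.eq_of_subset_of_subset ?_ ?_⟩
    · intro σ hσ s h hs
      have h1 : restrSub h (Pi D σ) = restrSub h (Pi D τ) := by
        rw [hσ s h hs, hτ s h hs]
      have h2 : Pi s (restrSub h σ) = Pi s (restrSub h τ) := by
        rw [hcom s D h σ, hcom s D h τ, h1]
      have := congrArg (red ar free) h2
      rwa [hexp, hexp] at this
    · intro σ hσ s h hs
      have h1 : restrSub h σ = restrSub h τ := hσ s h hs
      have : restrSub h (Pi D σ) = restrSub h (Pi D τ) := by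
        rw [← hcom s D h σ, ← hcom s D h τ, h1]
      rw [Set.mem_preimage] at *
      rw [this, hτ s h hs]
end

section
/- Every projective generalised probabilistic logic program satisfies the (semantic) Strong Independence Property: if φ and ψ are sets of L-structures on a finite domain D that semantically mention no common (g+1)-element tuple, and θ is a semantic g-ary trace on D with (P,Π)_D(θ) > 0, then (P,Π)_D(φ ∩ ψ | θ) = (P,Π)_D(φ | θ) · (P,Π)_D(ψ | θ). -/
def SemMentionsD {L₀ : Type} {ar₀ : L₀ → ℕ} {D : Finset ℕ} {n : ℕ}
    (Φ : Set (Str L₀ ar₀ ↥D)) (a : Fin n → ↥D) : Prop :=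
  ∃ ω₁ ∈ Φ, ∃ ω₂ ∉ Φ,
    ∀ (s : Finset ℕ) (h : s ⊆ D), (∃ i, (a i : ℕ) ∉ s) →
      restrSub h ω₁ = restrSub h ω₂

/-- Conditional probability for a set function. -/
noncomputable def CondOf {X : Type} (Q : Set X → ℝ) (E F : Set X) : ℝ :=
  Q (E ∩ F) / Q F

/-!
An `L'`-structure on `D` is a truth assignment to the ground atoms `R(a)`, and the free
distribution is then a product of one-atom weights `w`, `1 - w`. Since `Π` is an expansion
commuting with restrictions, `Π(x)` lies in the trace `θ` exactly when `x` agrees with a fixed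
assignment on the atoms whose support has at most `g` elements: `θ` is a cylinder. If the
support of an atom contains a `(g+1)`-tuple that `φ` does not mention, flipping that atom does
not change membership in `φ`; so `φ` depends only on the atoms all of whose `(g+1)`-tuples it
mentions, and likewise `ψ`. By hypothesis an atom relevant to both has at most `g` elements in
its support, i.e. it is fixed by `θ`, and a product measure conditioned on a cylinder makes
events depending on coordinate sets that overlap only inside the cylinder independent.
-/

open Function

section Pr

lemma Pr_comp_equiv {X Y : Type} [Fintype X] [Fintype Y] (e : X ≃ Y) (μ : Y → ℝ) (E : Set Y) :
    Pr (μ ∘ e) (e ⁻¹' E) = Pr μ E := by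
  classical
  exact e.sum_comp fun y => if y ∈ E then μ y else 0

lemma nonempty_of_Pr_ne_zero {X : Type} [Fintype X] {μ : X → ℝ} {E : Set X} (h : Pr μ E ≠ 0) :
    E.Nonempty :=
  Set.nonempty_iff_ne_empty.2 fun hE => h (by simp [Pr, hE])

lemma Pr_prod {X Y : Type} [Fintype X] [Fintype Y] (μ : X → ℝ) (ν : Y → ℝ)
    (A : Set X) (B : Set Y) :
    Pr (fun p : X × Y => μ p.1 * ν p.2) (A ×ˢ B) = Pr μ A * Pr ν B := by
  classical
  simp only [Pr, Fintype.sum_prod_type, Finset.sum_mul_sum, ite_zero_mul_ite_zero]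
  exact Finset.sum_congr rfl fun x _ => Finset.sum_congr rfl fun y _ =>
    if_congr Set.mem_prod rfl rfl

end Pr

section ProductWeight

def prodWeight {κ : Type} [Fintype κ] (F : κ → Bool → ℝ) (x : κ → Bool) : ℝ := ∏ i, F i (x i)

variable {κ : Type} [Fintype κ] [DecidableEq κ]

lemma Pr_prodWeight_univ (F : κ → Bool → ℝ) (hF : ∀ i, F i true + F i false = 1) :
    Pr (prodWeight F) Set.univ = 1 := by
  simp only [Pr, Set.mem_univ, if_true, prodWeight, ← Fintype.prod_sum, Fintype.sum_bool, hF,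
    Finset.prod_const_one]

theorem Pr_inter_of_dependsOn (F : κ → Bool → ℝ) (hF : ∀ i, F i true + F i false = 1)
    {s : Set κ} {A B : Set (κ → Bool)} (hA : DependsOn (· ∈ A) s) (hB : DependsOn (· ∈ B) sᶜ) :
    Pr (prodWeight F) (A ∩ B) = Pr (prodWeight F) A * Pr (prodWeight F) B := by
  classical
  let e := (Equiv.piEquivPiSubtypeProd (· ∈ s) fun _ => Bool).symm
  have he : ∀ u v i, e (u, v) i = if h : i ∈ s then u ⟨i, h⟩ else v ⟨i, h⟩ := fun _ _ _ => rfl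
  set μ₁ := prodWeight fun i : s => F i
  set μ₂ := prodWeight fun i : {i // i ∉ s} => F i
  have hweight : prodWeight F ∘ e = fun p => μ₁ p.1 * μ₂ p.2 := by
    funext ⟨u, v⟩
    simp only [comp_apply, μ₁, μ₂, prodWeight]
    rw [← Fintype.prod_subtype_mul_prod_subtype (· ∈ s)]
    congr 1 <;> refine Finset.prod_congr rfl fun i _ => ?_
    · rw [he, dif_pos i.2]
    · rw [he, dif_neg i.2]
  set A' : Set (s → Bool) := {u | e (u, fun _ => true) ∈ A}
  set B' : Set ({i // i ∉ s} → Bool) := {v | e (fun _ => true, v) ∈ B}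
  have hA' : e ⁻¹' A = A' ×ˢ Set.univ := by
    ext ⟨u, v⟩
    simp only [Set.mem_preimage, Set.mem_prod, Set.mem_univ, and_true, A', Set.mem_ofPred_eq]
    exact Eq.to_iff (hA fun i hi => by rw [he, he, dif_pos hi, dif_pos hi])
  have hB' : e ⁻¹' B = Set.univ ×ˢ B' := by
    ext ⟨u, v⟩
    simp only [Set.mem_preimage, Set.mem_prod, Set.mem_univ, true_and, B', Set.mem_ofPred_eq]
    exact Eq.to_iff (hB fun i hi => by rw [he, he, dif_neg hi, dif_neg hi])
  have hAB : e ⁻¹' (A ∩ B) = A' ×ˢ B' := by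
    rw [Set.preimage_inter, hA', hB', Set.prod_inter_prod, Set.inter_univ, Set.univ_inter]
  rw [← Pr_comp_equiv e, ← Pr_comp_equiv e _ A, ← Pr_comp_equiv e _ B, hweight, hA', hB', hAB,
    Pr_prod, Pr_prod, Pr_prod,
    Pr_prodWeight_univ (fun i : s => F i) (fun i => hF i),
    Pr_prodWeight_univ (fun i : {i // i ∉ s} => F i) (fun i => hF i), mul_one, one_mul]

end ProductWeight

section DependsOn

variable {κ α : Type}

lemma DependsOn.mem_inter {A B : Set (κ → α)} {s t : Set κ}
    (hA : DependsOn (· ∈ A) s) (hB : DependsOn (· ∈ B) t) : DependsOn (· ∈ A ∩ B) (s ∪ t) :=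
  fun _ _ h => congrArg₂ And (hA fun i hi => h i (.inl hi)) (hB fun i hi => h i (.inr hi))

lemma dependsOn_mem_pi (c : Set κ) (S : κ → Set α) :
    DependsOn (· ∈ c.pi S) c :=
  fun _ _ h => propext (forall₂_congr fun i hi => by rw [h i hi])

end DependsOn

section ConditionalIndependence

variable {κ : Type} [Fintype κ] [DecidableEq κ]

lemma dependsOn_of_update_eq {α : Type} {P : (κ → α) → Prop} {s : Set κ}
    (h : ∀ x i c, i ∉ s → P (update x i c) = P x) : DependsOn P s := by
  intro x y hxy
  suffices ∀ t : Finset κ, P (t.piecewise y x) = P x by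
    simpa using (this Finset.univ).symm
  intro t
  induction t using Finset.induction_on with
  | empty => rw [Finset.piecewise_empty]
  | insert j t _ ih =>
    rw [Finset.piecewise_insert]
    by_cases hj : j ∈ s
    · rw [update_eq_self_iff.2 (by by_cases j ∈ t <;> simp [*]), ih]
    · rw [h _ _ _ hj, ih]

theorem Pr_inter_mul_Pr_eq_of_dependsOn (F : κ → Bool → ℝ) (hF : ∀ i, F i true + F i false = 1)
    {a b c : Set κ} (habc : a ∩ b ⊆ c) (x₀ : κ → Bool) {A B : Set (κ → Bool)}
    (hA : DependsOn (· ∈ A) a) (hB : DependsOn (· ∈ B) b) :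
    Pr (prodWeight F) (A ∩ B ∩ c.pi fun i => {x₀ i}) * Pr (prodWeight F) (c.pi fun i => {x₀ i})
      = Pr (prodWeight F) (A ∩ c.pi fun i => {x₀ i})
        * Pr (prodWeight F) (B ∩ c.pi fun i => {x₀ i}) := by
  classical
  set T := c.pi fun i => {x₀ i}
  -- `σ` fixes `T` pointwise, and `σ ⁻¹' A` depends only on `a \ c`, which `B ∩ T` ignores.
  set σ : (κ → Bool) → κ → Bool := fun x => c.piecewise x₀ x
  have hσT : ∀ x ∈ T, σ x = x := fun x hx => funext fun i => by
    by_cases hi : i ∈ c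
    · simpa [σ, hi] using (hx i hi).symm
    · simp [σ, hi]
  have hσ : ∀ E, A ∩ E ∩ T = σ ⁻¹' A ∩ (E ∩ T) := fun E => by
    ext x
    by_cases hx : x ∈ T
    · simp [hσT x hx, hx]
    · simp [hx]
  have hσA : DependsOn (· ∈ σ ⁻¹' A) (a \ c) := fun x y h => hA fun i hi => by
    by_cases hic : i ∈ c
    · simp [σ, hic]
    · simp [σ, hic, h i ⟨hi, hic⟩]
  have hT : DependsOn (· ∈ T) (a \ c)ᶜ :=
    (dependsOn_mem_pi c _).mono fun i hi hia => hia.2 hi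
  have hBT : DependsOn (· ∈ B ∩ T) (a \ c)ᶜ :=
    (hB.mem_inter (dependsOn_mem_pi c _)).mono fun i hi hia =>
      hi.elim (fun hib => hia.2 (habc ⟨hia.1, hib⟩)) fun hic => hia.2 hic
  have h₁ := Pr_inter_of_dependsOn F hF hσA hBT
  have h₂ := Pr_inter_of_dependsOn F hF hσA hT
  have hAT : A ∩ T = σ ⁻¹' A ∩ T := by simpa using hσ Set.univ
  rw [hσ, h₁, hAT, h₂]
  ring

end ConditionalIndependence

section Atoms

variable {L₀ : Type} {ar₀ : L₀ → ℕ} {A : Type}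

abbrev Atom (L₀ : Type) (ar₀ : L₀ → ℕ) (A : Type) : Type := (R : L₀) × (Fin (ar₀ R) → A)

def atomEquiv : (Atom L₀ ar₀ A → Bool) ≃ Str L₀ ar₀ A := Equiv.piCurry fun _ _ => Bool

@[simp] lemma atomEquiv_apply (x : Atom L₀ ar₀ A → Bool) (R : L₀) (a : Fin (ar₀ R) → A) :
    atomEquiv x R a = x ⟨R, a⟩ := rfl

def Atom.support [DecidableEq A] (i : Atom L₀ ar₀ A) : Finset A := Finset.univ.image i.2

lemma Atom.mem_support [DecidableEq A] {i : Atom L₀ ar₀ A} {d : A} :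
    d ∈ i.support ↔ ∃ j, i.2 j = d := by
  simp [Atom.support]

lemma Pr_freeP_eq_Pr_prodWeight [Fintype L₀] [DecidableEq L₀] [Fintype A] [DecidableEq A]
    (w : L₀ → ℝ) (E : Set (Str L₀ ar₀ A)) :
    Pr (freeP ar₀ w) E
      = Pr (prodWeight fun i b => if b then w i.1 else 1 - w i.1) (atomEquiv ⁻¹' E) := by
  rw [← Pr_comp_equiv atomEquiv]
  congr 1
  funext x
  rw [comp_apply, freeP, prodWeight, ← Finset.univ_sigma_univ, Finset.prod_sigma]
  rfl

variable {D : Finset ℕ}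

lemma restrSub_atomEquiv_congr {s : Finset ℕ} (h : s ⊆ D) {x y : Atom L₀ ar₀ ↥D → Bool}
    (hxy : ∀ i : Atom L₀ ar₀ ↥D, (∀ j, (i.2 j : ℕ) ∈ s) → x i = y i) :
    restrSub h (atomEquiv x) = restrSub h (atomEquiv y) :=
  funext fun R => funext fun a => hxy ⟨R, _⟩ fun j => (a j).2

lemma forall_restrSub_atomEquiv_eq_iff {g : ℕ} {x y : Atom L₀ ar₀ ↥D → Bool} :
    (∀ (s : Finset ℕ) (h : s ⊆ D), s.card ≤ g →
        restrSub h (atomEquiv x) = restrSub h (atomEquiv y))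
      ↔ ∀ i : Atom L₀ ar₀ ↥D, i.support.card ≤ g → x i = y i := by
  constructor
  · intro hxy i hi
    set s := i.support.map (Embedding.subtype _)
    have hsD : s ⊆ D := fun n hn => by
      obtain ⟨d, -, rfl⟩ := Finset.mem_map.1 hn
      exact d.2
    have hs : ∀ j, (i.2 j : ℕ) ∈ s := fun j =>
      Finset.mem_map_of_mem _ (Atom.mem_support.2 ⟨j, rfl⟩)
    exact congrFun (congrFun (hxy s hsD (by rwa [Finset.card_map])) i.1) fun j => ⟨i.2 j, hs j⟩
  · intro hxy s h hs
    refine restrSub_atomEquiv_congr h fun i hi => hxy i (le_trans ?_ hs)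
    rw [← Finset.card_map (Embedding.subtype (· ∈ D))]
    refine Finset.card_le_card fun n hn => ?_
    obtain ⟨d, hd, rfl⟩ := Finset.mem_map.1 hn
    obtain ⟨j, rfl⟩ := Atom.mem_support.1 hd
    exact hi j

end Atoms

section Mentions

variable {L₀ L₁ : Type} {ar₀ : L₀ → ℕ} {ar₁ : L₁ → ℕ} {D : Finset ℕ} {g : ℕ}

def MentionsAtom (g : ℕ) (χ : Set (Str L₀ ar₀ ↥D)) (i : Atom L₁ ar₁ ↥D) : Prop :=
  ∀ b : Fin (g + 1) → ↥D, Injective b → (∀ j, b j ∈ i.support) → SemMentionsD χ b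

lemma mem_iff_of_not_semMentionsD {n : ℕ} {χ : Set (Str L₀ ar₀ ↥D)} {b : Fin n → ↥D}
    (hb : ¬ SemMentionsD χ b) {ω ω' : Str L₀ ar₀ ↥D}
    (h : ∀ (s : Finset ℕ) (hs : s ⊆ D), (∃ j, (b j : ℕ) ∉ s) → restrSub hs ω = restrSub hs ω') :
    ω ∈ χ ↔ ω' ∈ χ := by
  constructor
  · exact fun hω => by_contra fun hω' => hb ⟨ω, hω, ω', hω', h⟩
  · exact fun hω' => by_contra fun hω => hb ⟨ω', hω', ω, hω, fun s hs hj => (h s hs hj).symm⟩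

lemma mentionsAtom_inter_subset {φ ψ : Set (Str L₀ ar₀ ↥D)}
    (hmen : ∀ a : Fin (g + 1) → ↥D, Injective a → ¬ (SemMentionsD φ a ∧ SemMentionsD ψ a)) :
    {i : Atom L₁ ar₁ ↥D | MentionsAtom g φ i} ∩ {i | MentionsAtom g ψ i}
      ⊆ {i | i.support.card ≤ g} := by
  rintro i ⟨hφ, hψ⟩
  show i.support.card ≤ g
  by_contra! hcard
  let b : Fin (g + 1) → ↥D := fun j => i.support.equivFin.symm (Fin.castLE hcard j)
  have hb : Injective b := Subtype.val_injective.comp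
    (i.support.equivFin.symm.injective.comp (Fin.castLE_injective hcard))
  have hbi : ∀ j, b j ∈ i.support := fun j => (i.support.equivFin.symm _).2
  exact hmen b hb ⟨hφ b hb hbi, hψ b hb hbi⟩

end Mentions

section Expansion

variable {L : Type} {ar : L → ℕ} {free : L → Prop}
  {Pi : ∀ s : Finset ℕ, Str {R : L // free R} (ar' ar free) ↥s → Str L ar ↥s}
  {D : Finset ℕ} {g : ℕ}

lemma IsExpansion.injective (hexp : IsExpansion ar free Pi) (s : Finset ℕ) : Injective (Pi s) :=
  LeftInverse.injective (hexp s)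

lemma mem_update_iff_of_not_mentionsAtom [DecidableEq L] (hcom : CommutesSub ar free Pi)
    {χ : Set (Str L ar ↥D)}
    {i₀ : Atom {R : L // free R} (ar' ar free) ↥D} (hi₀ : ¬ MentionsAtom g χ i₀)
    (x : Atom {R : L // free R} (ar' ar free) ↥D → Bool) (c : Bool) :
    Pi D (atomEquiv (update x i₀ c)) ∈ χ ↔ Pi D (atomEquiv x) ∈ χ := by
  obtain ⟨b, -, hbi₀, hb⟩ : ∃ b : Fin (g + 1) → ↥D,
      Injective b ∧ (∀ j, b j ∈ i₀.support) ∧ ¬ SemMentionsD χ b := by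
    simpa [MentionsAtom] using hi₀
  refine mem_iff_of_not_semMentionsD hb fun s hs ⟨j, hj⟩ => ?_
  have hne : ∀ i : Atom _ _ ↥D, (∀ k, (i.2 k : ℕ) ∈ s) → i ≠ i₀ := by
    rintro i hi rfl
    obtain ⟨k, hk⟩ := Atom.mem_support.1 (hbi₀ j)
    exact hj (hk ▸ hi k)
  rw [← hcom, ← hcom, restrSub_atomEquiv_congr hs fun i hi => update_of_ne (hne i hi) _ _]

lemma dependsOn_mentionsAtom [Fintype L] (hcom : CommutesSub ar free Pi)
    (χ : Set (Str L ar ↥D)) :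
    DependsOn (· ∈ (fun x => Pi D (atomEquiv x)) ⁻¹' χ)
      {i : Atom {R : L // free R} (ar' ar free) ↥D | MentionsAtom g χ i} := by
  classical
  exact dependsOn_of_update_eq fun x i c hi =>
    propext (mem_update_iff_of_not_mentionsAtom hcom hi x c)

lemma preimage_semTrace (hexp : IsExpansion ar free Pi) (hcom : CommutesSub ar free Pi)
    {ω₀ : Str L ar ↥D} {x₀ : Atom {R : L // free R} (ar' ar free) ↥D → Bool}
    (hx₀ : Pi D (atomEquiv x₀) ∈ SemTrace g ω₀) :
    (fun x => Pi D (atomEquiv x)) ⁻¹' SemTrace g ω₀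
      = {i | i.support.card ≤ g}.pi fun i => {x₀ i} := by
  ext x
  simp only [Set.mem_preimage, SemTrace, Set.mem_ofPred_eq, Set.mem_pi, Set.mem_singleton_iff]
  rw [← forall_restrSub_atomEquiv_eq_iff]
  refine forall₃_congr fun s h hs => ?_
  rw [← hx₀ s h hs, ← hcom, ← hcom, (hexp.injective s).eq_iff]

end Expansion

theorem stmt11_general {L : Type} [Fintype L] [DecidableEq L] (ar : L → ℕ)
    (free : L → Prop) [DecidablePred free]
    (w : {R : L // free R} → ℝ)
    (Pi : ∀ s : Finset ℕ, Str {R : L // free R} (ar' ar free) ↥s → Str L ar ↥s)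
    (hexp : IsExpansion ar free Pi)
    (hcom : CommutesSub ar free Pi)
    (g : ℕ)
    (D : Finset ℕ) (φ ψ : Set (Str L ar ↥D))
    (hmen : ∀ a : Fin (g + 1) → ↥D, Function.Injective a →
      ¬ (SemMentionsD φ a ∧ SemMentionsD ψ a))
    (ω₀ : Str L ar ↥D)
    (Q : Set (Str L ar ↥D) → ℝ)
    (hQ : ∀ E, Q E = Pr (freeP (ar' ar free) w) ((Pi D) ⁻¹' E))
    (hpos : 0 < Q (SemTrace g ω₀)) :
    CondOf Q (φ ∩ ψ) (SemTrace g ω₀)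
      = CondOf Q φ (SemTrace g ω₀) * CondOf Q ψ (SemTrace g ω₀) := by
  set F : Atom {R : L // free R} (ar' ar free) ↥D → Bool → ℝ :=
    fun i b => if b then w i.1 else 1 - w i.1
  set E : Set (Str L ar ↥D) → Set (Atom {R : L // free R} (ar' ar free) ↥D → Bool) :=
    fun χ => (fun x => Pi D (atomEquiv x)) ⁻¹' χ
  have hQE : ∀ χ, Q χ = Pr (prodWeight F) (E χ) := fun χ => by
    rw [hQ, Pr_freeP_eq_Pr_prodWeight]
    rfl
  obtain ⟨x₀, hx₀⟩ := nonempty_of_Pr_ne_zero ((hQE _).symm ▸ hpos.ne')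
  have key := Pr_inter_mul_Pr_eq_of_dependsOn F (fun i => by simp [F])
    (mentionsAtom_inter_subset hmen) x₀ (dependsOn_mentionsAtom hcom φ)
    (dependsOn_mentionsAtom hcom ψ)
  rw [← preimage_semTrace hexp hcom hx₀] at key
  have hθ : Q (SemTrace g ω₀) ≠ 0 := hpos.ne'
  simp only [CondOf, hQE, E, Set.preimage_inter] at key hθ ⊢
  field_simp
  linear_combination key

/-- every projective generalised probabilistic logic program
satisfies the semantic Strong Independence Property: events that semantically
mention no common `(g+1)`-tuple are conditionally independent given any
semantic `g`-ary trace of positive probability. -/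
theorem stmt11 {L : Type} [Fintype L] [DecidableEq L] (ar : L → ℕ)
    (r : ℕ) (hr : ∀ R : L, ar R ≤ r)
    (free : L → Prop) [DecidablePred free]
    (w : {R : L // free R} → ℝ) (hw : ∀ R, 0 < w R ∧ w R < 1)
    (Pi : ∀ s : Finset ℕ, Str {R : L // free R} (ar' ar free) ↥s → Str L ar ↥s)
    (hexp : IsExpansion ar free Pi)
    (hcom : CommutesSub ar free Pi)
    (g : ℕ) (hg : g < r)
    (D : Finset ℕ) (φ ψ : Set (Str L ar ↥D))
    (hmen : ∀ a : Fin (g + 1) → ↥D, Function.Injective a →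
      ¬ (SemMentionsD φ a ∧ SemMentionsD ψ a))
    (ω₀ : Str L ar ↥D)
    (Q : Set (Str L ar ↥D) → ℝ)
    (hQ : ∀ E, Q E = Pr (freeP (ar' ar free) w) ((Pi D) ⁻¹' E))
    (hpos : 0 < Q (SemTrace g ω₀)) :
    CondOf Q (φ ∩ ψ) (SemTrace g ω₀)
      = CondOf Q φ (SemTrace g ω₀) * CondOf Q ψ (SemTrace g ω₀) :=
  stmt11_general ar free w Pi hexp hcom g D φ ψ hmen ω₀ Q hQ hpos
end

section
/- Annotated-disjunction encoding correctness: given p₁,…,p_m ∈ (0,1) with p₁+⋯+p_m = 1 and p_i < 1 for i < m, define weights w₁,…,w_{m−1} by w_i = p_i / ∏_{j<i}(1 − w_j), and let R₁,…,R_{m−1} be independent Bernoulli random variables with Pr(R_i) = w_i. Define Q₁ := R₁, Q_i := R_i ∧ ¬R_{i−1} ∧ ⋯ ∧ ¬R₁ for 2 ≤ i ≤ m−1, and Q_m := ¬R_{m−1} ∧ ⋯ ∧ ¬R₁. Then each w_i ∈ (0,1), exactly one Q_i holds almost surely, and Pr(Q_i) = p_i for all i. -/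
open MeasureTheory ProbabilityTheory

/-- correctness of the annotated-disjunction encoding. Given
probabilities `p₁,…,p_m ∈ (0,1)` summing to `1`, weights
`w_i = p_i / ∏_{j<i} (1 - w_j)` and independent events `R_i` with
`μ(R_i) = w_i`, the derived events `Q_i` (`Q_i = R_i ∩ ¬R_{i-1} ∩ ⋯ ∩ ¬R₁`, and
`Q_m = ¬R_{m-1} ∩ ⋯ ∩ ¬R₁`) satisfy: each `w_i ∈ (0,1)`, almost surely exactly
one `Q_i` holds, and `μ(Q_i) = p_i`. -/
theorem stmt15 {Ω : Type} [MeasurableSpace Ω] (μ : Measure Ω)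
    [IsProbabilityMeasure μ]
    (m : ℕ) (p : Fin m → ℝ)
    (hp01 : ∀ i, 0 < p i ∧ p i < 1) (hsum : ∑ i, p i = 1)
    (w : Fin (m - 1) → ℝ)
    (hw : ∀ i : Fin (m - 1),
      w i = p (Fin.castLE (Nat.sub_le m 1) i) /
        ∏ j ∈ Finset.univ.filter (fun j : Fin (m - 1) => j < i), (1 - w j))
    (R : Fin (m - 1) → Set Ω) (hmeas : ∀ i, MeasurableSet (R i))
    (hind : iIndepSet R μ)
    (hprob : ∀ i, μ (R i) = ENNReal.ofReal (w i))
    (Q : Fin m → Set Ω)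
    (hQ : ∀ i : Fin m, Q i =
      if h : (i : ℕ) < m - 1 then
        R ⟨i, h⟩ ∩ ⋂ (j : Fin (m - 1)) (_ : (j : ℕ) < (i : ℕ)), (R j)ᶜ
      else ⋂ j : Fin (m - 1), (R j)ᶜ) :
    (∀ i, 0 < w i ∧ w i < 1) ∧
      μ {x | ∃! i : Fin m, x ∈ Q i} = 1 ∧
      ∀ i : Fin m, μ (Q i) = ENNReal.ofReal (p i) := by
  classical
  have hm : 0 < m := by
    rcases Nat.eq_zero_or_pos m with hm0 | hm0
    · subst hm0; simp at hsum
    · exact hm0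
  set S : ℕ → ℝ := fun k => ∑ i ∈ Finset.univ.filter (fun i : Fin m => (i : ℕ) < k), p i
    with hSdef
  set P : ℕ → ℝ := fun k =>
      ∏ j ∈ Finset.univ.filter (fun j : Fin (m - 1) => (j : ℕ) < k), (1 - w j) with hPdef
  -- filter insert lemmas
  have hfiltm : ∀ k (hk : k < m),
      Finset.univ.filter (fun i : Fin m => (i : ℕ) < k + 1)
        = insert ⟨k, hk⟩ (Finset.univ.filter (fun i : Fin m => (i : ℕ) < k)) := by
    intro k hk; ext j; simp [Fin.ext_iff]; omega
  have hfiltn : ∀ k (hk : k < m - 1),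
      Finset.univ.filter (fun j : Fin (m - 1) => (j : ℕ) < k + 1)
        = insert ⟨k, hk⟩ (Finset.univ.filter (fun j : Fin (m - 1) => (j : ℕ) < k)) := by
    intro k hk; ext j; simp [Fin.ext_iff]; omega
  have hSsucc : ∀ k (hk : k < m), S (k + 1) = S k + p ⟨k, hk⟩ := by
    intro k hk
    simp only [hSdef]
    rw [hfiltm k hk, Finset.sum_insert (by simp)]
    ring
  have hSlt : ∀ k, k < m → S k < 1 := by
    intro k hk
    have hsplit : S k + ∑ i ∈ Finset.univ.filter (fun i : Fin m => ¬ (i : ℕ) < k), p i = 1 := by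
      simp only [hSdef]
      rw [Finset.sum_filter_add_sum_filter_not]
      exact hsum
    have hpos : 0 < ∑ i ∈ Finset.univ.filter (fun i : Fin m => ¬ (i : ℕ) < k), p i := by
      apply Finset.sum_pos (fun i _ => (hp01 i).1)
      exact ⟨⟨k, hk⟩, by simp⟩
    linarith
  -- filter in hw equals our canonical filter
  have hwP : ∀ i : Fin (m - 1), w i = p (Fin.castLE (Nat.sub_le m 1) i) / P (i : ℕ) := by
    intro i
    rw [hw i]
    congr 1
  have hkey : ∀ k, k ≤ m - 1 → P k = 1 - S k := by
    intro k
    induction k with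
    | zero => intro _; simp [hPdef, hSdef]
    | succ k ih =>
      intro hk1
      have hkm : k < m - 1 := hk1
      have hkm' : k < m := lt_of_lt_of_le hkm (Nat.sub_le m 1)
      have ihk := ih (le_of_lt hkm)
      have hPkpos : 0 < P k := by rw [ihk]; linarith [hSlt k hkm']
      have hwk : w ⟨k, hkm⟩ = p ⟨k, hkm'⟩ / P k := hwP ⟨k, hkm⟩
      have hPsucc : P (k + 1) = (1 - w ⟨k, hkm⟩) * P k := by
        simp only [hPdef]
        rw [hfiltn k hkm, Finset.prod_insert (by simp)]
      have hne : P k ≠ 0 := ne_of_gt hPkpos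
      rw [hPsucc, hwk, hSsucc k hkm', sub_mul, div_mul_cancel₀ _ hne, ihk]
      ring
  -- bounds on w
  have hw01 : ∀ i, 0 < w i ∧ w i < 1 := by
    intro i
    have hi1 : (i : ℕ) < m - 1 := i.2
    have hi2 : (i : ℕ) < m := lt_of_lt_of_le hi1 (Nat.sub_le m 1)
    have hi3 : (i : ℕ) + 1 < m := by omega
    have hPi : P i = 1 - S i := hkey i (le_of_lt hi1)
    have hPpos : 0 < P (i : ℕ) := by rw [hPi]; linarith [hSlt i hi2]
    have hwi : w i = p ⟨(i : ℕ), hi2⟩ / P (i : ℕ) := hwP i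
    have hppos : 0 < p ⟨(i : ℕ), hi2⟩ := (hp01 _).1
    constructor
    · rw [hwi]; exact div_pos hppos hPpos
    · rw [hwi, div_lt_one hPpos, hPi]
      have := hSlt (i + 1) hi3
      rw [hSsucc i hi2] at this
      linarith
  refine ⟨hw01, ?_, ?_⟩
  · -- almost sure unique Q
    have huniv : {x | ∃! i : Fin m, x ∈ Q i} = Set.univ := by
      ext x
      simp only [Set.mem_setOf_eq, Set.mem_univ, iff_true]
      by_cases h : ∃ k : ℕ, ∃ hk : k < m - 1, x ∈ R ⟨k, hk⟩
      · set k := Nat.find h with hkdef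
        obtain ⟨hkm, hxk⟩ := Nat.find_spec h
        have hkm' : k < m := lt_of_lt_of_le hkm (Nat.sub_le m 1)
        refine ⟨⟨k, hkm'⟩, ?_, ?_⟩
        · show x ∈ Q ⟨k, hkm'⟩
          rw [hQ, dif_pos hkm]
          refine ⟨hxk, ?_⟩
          apply Set.mem_iInter₂.mpr
          intro j hj
          intro hxj
          exact Nat.find_min h hj ⟨j.2, hxj⟩
        · intro i' hi'
          have hi'' : x ∈ Q i' := hi'
          by_cases h' : (i' : ℕ) < m - 1
          · rw [hQ i', dif_pos h'] at hi''
            obtain ⟨hx1, hx2⟩ := hi''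
            have hle : k ≤ (i' : ℕ) := Nat.find_le ⟨h', hx1⟩
            have heq : (i' : ℕ) = k := by
              by_contra hne
              have hklt : k < (i' : ℕ) := lt_of_le_of_ne hle (Ne.symm hne)
              exact (Set.mem_iInter₂.mp hx2 ⟨k, hkm⟩ hklt) hxk
            exact Fin.ext heq
          · rw [hQ i', dif_neg h'] at hi''
            exact absurd hxk (Set.mem_iInter.mp hi'' ⟨k, hkm⟩)
      · push_neg at h
        have hlast : m - 1 < m := Nat.sub_lt hm one_pos
        refine ⟨⟨m - 1, hlast⟩, ?_, ?_⟩
        · show x ∈ Q ⟨m - 1, hlast⟩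
          rw [hQ, dif_neg (lt_irrefl (m - 1))]
          exact Set.mem_iInter.mpr fun j => h j j.2
        · intro i' hi'
          have hi'' : x ∈ Q i' := hi'
          by_cases h' : (i' : ℕ) < m - 1
          · rw [hQ i', dif_pos h'] at hi''
            exact absurd hi''.1 (h (i' : ℕ) h')
          · exact Fin.ext (show ((i' : Fin m) : ℕ) = m - 1 by omega)
    rw [huniv]
    exact measure_univ
  · -- probabilities of Q
    have hcompl : ∀ j, μ ((R j)ᶜ) = ENNReal.ofReal (1 - w j) := by
      intro j
      rw [prob_compl_eq_one_sub (hmeas j), hprob j, ← ENNReal.ofReal_one,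
        ← ENNReal.ofReal_sub _ (le_of_lt (hw01 j).1)]
    have hIndep := (iIndepSet_iff R μ).mp hind
    intro i
    have hi2 : (i : ℕ) < m := i.2
    by_cases h : (i : ℕ) < m - 1
    · rw [hQ i, dif_pos h]
      set i0 : Fin (m - 1) := ⟨i, h⟩ with hi0
      set t : Finset (Fin (m - 1)) :=
        Finset.univ.filter (fun j : Fin (m - 1) => (j : ℕ) < (i : ℕ)) with htdef
      set f : Fin (m - 1) → Set Ω := fun j => if j = i0 then R i0 else (R j)ᶜ with hfdef
      have hnotmem : i0 ∉ t := by simp [htdef, hi0]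
      have hset : R i0 ∩ ⋂ (j : Fin (m - 1)) (_ : (j : ℕ) < (i : ℕ)), (R j)ᶜ
          = ⋂ j ∈ insert i0 t, f j := by
        rw [Finset.set_biInter_insert]
        congr 1
        · simp [hfdef]
        · ext x
          simp only [Set.mem_iInter, htdef, Finset.mem_filter, Finset.mem_univ, true_and, hfdef]
          constructor
          · intro hx j hj
            rw [if_neg (by rintro rfl; exact absurd hj (by simp [hi0]))]
            exact hx j hj
          · intro hx j hj
            have := hx j hj
            rwa [if_neg (by rintro rfl; exact absurd hj (by simp [hi0]))] at this
      rw [hset]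
      rw [hIndep (insert i0 t) (f := f) ?_]
      · rw [Finset.prod_insert hnotmem]
        have hf0 : f i0 = R i0 := if_pos rfl
        have hprodt : ∏ j ∈ t, μ (f j) = ∏ j ∈ t, ENNReal.ofReal (1 - w j) := by
          apply Finset.prod_congr rfl
          intro j hj
          have hji : j ≠ i0 := by rintro rfl; exact hnotmem hj
          rw [hfdef]; simp only [if_neg hji]
          exact hcompl j
        rw [hf0, hprob i0, hprodt, ← ENNReal.ofReal_prod_of_nonneg
          (fun j _ => by linarith [(hw01 j).2]),
          ← ENNReal.ofReal_mul (le_of_lt (hw01 i0).1)]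
        congr 1
        have : ∏ j ∈ t, (1 - w j) = P (i : ℕ) := rfl
        rw [this]
        have hPi : P (i : ℕ) = 1 - S (i : ℕ) := hkey i (le_of_lt h)
        have hPpos : 0 < P (i : ℕ) := by rw [hPi]; linarith [hSlt i hi2]
        rw [hwP i0, div_mul_cancel₀ _ (ne_of_gt hPpos)]
        congr 1
      · intro j hj
        rw [hfdef]
        by_cases hji : j = i0
        · subst hji; simp only [if_pos rfl]
          exact MeasurableSpace.measurableSet_generateFrom (Set.mem_singleton _)
        · simp only [if_neg hji]
          exact (MeasurableSpace.measurableSet_generateFrom (Set.mem_singleton _)).compl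
    · rw [hQ i, dif_neg h]
      have hival : (i : ℕ) = m - 1 := by omega
      have hset : (⋂ j : Fin (m - 1), (R j)ᶜ) = ⋂ j ∈ (Finset.univ : Finset (Fin (m - 1))), (R j)ᶜ := by
        simp
      rw [hset, hIndep Finset.univ (f := fun j => (R j)ᶜ)
        (fun j _ => (MeasurableSpace.measurableSet_generateFrom (Set.mem_singleton _)).compl)]
      have : ∏ j : Fin (m - 1), μ ((R j)ᶜ) = ENNReal.ofReal (∏ j, (1 - w j)) := by
        rw [ENNReal.ofReal_prod_of_nonneg (fun j _ => by linarith [(hw01 j).2])]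
        exact Finset.prod_congr rfl fun j _ => hcompl j
      rw [this]
      congr 1
      have hfplt : Finset.univ.filter (fun j : Fin (m - 1) => (j : ℕ) < m - 1) = Finset.univ := by
        ext j; simp [j.2]
      have hPuniv : ∏ j, (1 - w j) = P (m - 1) := by
        simp only [hPdef]; rw [hfplt]
      rw [hPuniv, hkey (m - 1) le_rfl]
      have hsplit : S (m - 1) + ∑ j ∈ Finset.univ.filter (fun j : Fin m => ¬ (j : ℕ) < m - 1), p j = 1 := by
        simp only [hSdef]
        rw [Finset.sum_filter_add_sum_filter_not]
        exact hsum
      have hsingle : Finset.univ.filter (fun j : Fin m => ¬ (j : ℕ) < m - 1) = {i} := by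
        ext j; simp [Fin.ext_iff]; omega
      rw [hsingle, Finset.sum_singleton] at hsplit
      linarith
end
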